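/- Let ([0,1],f) and (X,g) be BTDSs, where ([0,1],σ,σ) (σ the usual topology) and (X,ψ1,ψ2) are bitopological spaces, and suppose f ≈^PH_F g | x→y via a BTDS-path homotopy H. If (X,ψ1,ψ2) is a pairwise T3, pairwise locally compact, pairwise P-space, then the following are equivalent: (i) X has the PH-Rothberger property; (ii) X has the PH-almost Rothberger property; (iii) X has the PH-weak Rothberger property. -/

import Mathlib

open Set Topology

universe u v w

/-- A map between bitopological spaces is pairwise continuous if it is continuous
with respect to the first topologies and with respect to the second topologies. -/
def PairwiseContinuous {X : Type u} {Y : Type v}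
    (t1 t2 : TopologicalSpace X) (s1 s2 : TopologicalSpace Y) (f : X → Y) : Prop :=
  Continuous[t1, s1] f ∧ Continuous[t2, s2] f

/-- The product topology on `X × [0,1]` where `X` carries `t` and `[0,1]` the usual topology. -/
def prodI {X : Type u} (t : TopologicalSpace X) : TopologicalSpace (X × unitInterval) :=
  @instTopologicalSpaceProd X unitInterval t inferInstance

/-- A BTDS-homotopy between `f` and `g` relative to `F`:
a pairwise continuous `H : X × [0,1] → Y` with `H(x,0) = F(f x)` and `H(x,1) = g(F x)`. -/
def IsBTDSHomotopy {X : Type u} {Y : Type v}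
    (t1 t2 : TopologicalSpace X) (s1 s2 : TopologicalSpace Y)
    (f : X → X) (g : Y → Y) (F : X → Y) (H : X × unitInterval → Y) : Prop :=
  PairwiseContinuous (prodI t1) (prodI t2) s1 s2 H ∧
    (∀ x, H (x, 0) = F (f x)) ∧ (∀ x, H (x, 1) = g (F x))

/-- A BTDS-iteration homotopy between `f` and `g` relative to `F`. -/
def IsBTDSIterHomotopy {X : Type u} {Y : Type v}
    (t1 t2 : TopologicalSpace X) (s1 s2 : TopologicalSpace Y)
    (f : X → X) (g : Y → Y) (F : X → Y) (H : X × unitInterval → Y) : Prop :=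
  PairwiseContinuous (prodI t1) (prodI t2) s1 s2 H ∧
    (∀ (x : X) (n : ℕ), H (f^[n + 1] x, 0) = F (f (f^[n] x))) ∧
    (∀ (x : X) (n : ℕ), H (f^[n + 1] x, 1) = g (F (f^[n] x)))

/-- A bitopological path in `(X, s1, s2)` from `x` to `y`. -/
def IsBitopPath {X : Type u} (s1 s2 : TopologicalSpace X)
    (F : unitInterval → X) (x y : X) : Prop :=
  PairwiseContinuous inferInstance inferInstance s1 s2 F ∧ F 0 = x ∧ F 1 = y

/-- A BTDS-path homotopy between `f` and `g` relative to the bitopological path `F`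
from `x` to `y`. -/
def IsBTDSPathHomotopy {X : Type u} (s1 s2 : TopologicalSpace X)
    (f : unitInterval → unitInterval) (g : X → X) (F : unitInterval → X) (x y : X)
    (H : unitInterval × unitInterval → X) : Prop :=
  PairwiseContinuous inferInstance inferInstance s1 s2 H ∧
    (∀ m : unitInterval, 0 < (m : ℝ) → (m : ℝ) < 1 →
      H (m, 0) = F (f m) ∧ H (m, 1) = g (F m)) ∧
    (∀ n : unitInterval, H (0, n) = x ∧ H (1, n) = y)

/-- `𝒪_i`: the collection of all open covers w.r.t. the topology `s`. -/
def OpenCovers {Y : Type v} (s : TopologicalSpace Y) : Set (Set (Set Y)) :=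
  {𝒰 | (∀ U ∈ 𝒰, IsOpen[s] U) ∧ ⋃₀ 𝒰 = univ}

/-- `𝒪^D_{ij}`: families of `si`-open sets whose union is `sj`-dense. -/
def DenseFamilies {Y : Type v} (si sj : TopologicalSpace Y) : Set (Set (Set Y)) :=
  {𝒰 | (∀ U ∈ 𝒰, IsOpen[si] U) ∧ @closure Y sj (⋃₀ 𝒰) = univ}

/-- `𝒪̄_{ij}`: families of `si`-open sets whose `sj`-closures cover `Y`. -/
def ClosureCovers {Y : Type v} (si sj : TopologicalSpace Y) : Set (Set (Set Y)) :=
  {𝒰 | (∀ U ∈ 𝒰, IsOpen[si] U) ∧ (⋃ U ∈ 𝒰, @closure Y sj U) = univ}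

/-- `S_1^H(𝒜, ℬ)` relative to the homotopy `H`. -/
def S1H {X : Type u} {Y : Type v} (H : X × unitInterval → Y)
    (A B : Set (Set (Set Y))) : Prop :=
  ∀ 𝒰 : ℕ → Set (Set Y), (∀ n, 𝒰 n ∈ A) →
    ∀ x : X, (∀ n, H (x, 0) ∈ ⋃₀ 𝒰 n) →
      ∃ U : ℕ → Set Y, (∀ n, U n ∈ 𝒰 n) ∧ (∀ n, H (x, 1) ∈ U n) ∧ Set.range U ∈ B

/-- `S_fin^H(𝒜, ℬ)` relative to the homotopy `H`. -/
def SfinH {X : Type u} {Y : Type v} (H : X × unitInterval → Y)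
    (A B : Set (Set (Set Y))) : Prop :=
  ∀ 𝒰 : ℕ → Set (Set Y), (∀ n, 𝒰 n ∈ A) →
    ∀ x : X, (∀ n, H (x, 0) ∈ ⋃₀ 𝒰 n) →
      ∃ 𝒱 : ℕ → Set (Set Y), (∀ n, (𝒱 n).Finite ∧ 𝒱 n ⊆ 𝒰 n) ∧
        (∀ n, H (x, 1) ∈ ⋃₀ 𝒱 n) ∧ (⋃ n, 𝒱 n) ∈ B

/-- `S_1^PH(𝒜, ℬ)` relative to the path homotopy `H`. -/
def S1PH {X : Type u} (H : unitInterval × unitInterval → X)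
    (A B : Set (Set (Set X))) : Prop :=
  ∀ 𝒰 : ℕ → Set (Set X), (∀ n, 𝒰 n ∈ A) →
    ∀ m : unitInterval, 0 < (m : ℝ) → (m : ℝ) < 1 → (∀ n, H (m, 0) ∈ ⋃₀ 𝒰 n) →
      ∃ U : ℕ → Set X, (∀ n, U n ∈ 𝒰 n) ∧ (∀ n, H (m, 1) ∈ U n) ∧ Set.range U ∈ B

/-- `S_fin^PH(𝒜, ℬ)` relative to the path homotopy `H`. -/
def SfinPH {X : Type u} (H : unitInterval × unitInterval → X)
    (A B : Set (Set (Set X))) : Prop :=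
  ∀ 𝒰 : ℕ → Set (Set X), (∀ n, 𝒰 n ∈ A) →
    ∀ m : unitInterval, 0 < (m : ℝ) → (m : ℝ) < 1 → (∀ n, H (m, 0) ∈ ⋃₀ 𝒰 n) →
      ∃ 𝒱 : ℕ → Set (Set X), (∀ n, (𝒱 n).Finite ∧ 𝒱 n ⊆ 𝒰 n) ∧
        (∀ n, H (m, 1) ∈ ⋃₀ 𝒱 n) ∧ (⋃ n, 𝒱 n) ∈ B

/-- `Y` has the H-Rothberger property (both the (1,2) and the (2,1) versions). -/
def HRothberger {X : Type u} {Y : Type v} (H : X × unitInterval → Y)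
    (s1 s2 : TopologicalSpace Y) : Prop :=
  S1H H (OpenCovers s1) (OpenCovers s2) ∧ S1H H (OpenCovers s2) (OpenCovers s1)

/-- `Y` has the H-almost Rothberger property. -/
def HAlmostRothberger {X : Type u} {Y : Type v} (H : X × unitInterval → Y)
    (s1 s2 : TopologicalSpace Y) : Prop :=
  S1H H (OpenCovers s1) (ClosureCovers s1 s2) ∧ S1H H (OpenCovers s2) (ClosureCovers s2 s1)

/-- `Y` has the H-weak Rothberger property. -/
def HWeakRothberger {X : Type u} {Y : Type v} (H : X × unitInterval → Y)
    (s1 s2 : TopologicalSpace Y) : Prop :=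
  S1H H (OpenCovers s1) (DenseFamilies s1 s2) ∧ S1H H (OpenCovers s2) (DenseFamilies s2 s1)

/-- `Y` has the H-Menger property. -/
def HMenger {X : Type u} {Y : Type v} (H : X × unitInterval → Y)
    (s1 s2 : TopologicalSpace Y) : Prop :=
  SfinH H (OpenCovers s1) (OpenCovers s2) ∧ SfinH H (OpenCovers s2) (OpenCovers s1)

/-- `Y` has the H-almost Menger property. -/
def HAlmostMenger {X : Type u} {Y : Type v} (H : X × unitInterval → Y)
    (s1 s2 : TopologicalSpace Y) : Prop :=
  SfinH H (OpenCovers s1) (ClosureCovers s1 s2) ∧ SfinH H (OpenCovers s2) (ClosureCovers s2 s1)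

/-- `Y` has the H-weak Menger property. -/
def HWeakMenger {X : Type u} {Y : Type v} (H : X × unitInterval → Y)
    (s1 s2 : TopologicalSpace Y) : Prop :=
  SfinH H (OpenCovers s1) (DenseFamilies s1 s2) ∧ SfinH H (OpenCovers s2) (DenseFamilies s2 s1)

/-- `X` has the PH-Rothberger property. -/
def PHRothberger {X : Type u} (H : unitInterval × unitInterval → X)
    (s1 s2 : TopologicalSpace X) : Prop :=
  S1PH H (OpenCovers s1) (OpenCovers s2) ∧ S1PH H (OpenCovers s2) (OpenCovers s1)

/-- `X` has the PH-almost Rothberger property. -/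
def PHAlmostRothberger {X : Type u} (H : unitInterval × unitInterval → X)
    (s1 s2 : TopologicalSpace X) : Prop :=
  S1PH H (OpenCovers s1) (ClosureCovers s1 s2) ∧ S1PH H (OpenCovers s2) (ClosureCovers s2 s1)

/-- `X` has the PH-weak Rothberger property. -/
def PHWeakRothberger {X : Type u} (H : unitInterval × unitInterval → X)
    (s1 s2 : TopologicalSpace X) : Prop :=
  S1PH H (OpenCovers s1) (DenseFamilies s1 s2) ∧ S1PH H (OpenCovers s2) (DenseFamilies s2 s1)

/-- `X` has the PH-Menger property. -/
def PHMenger {X : Type u} (H : unitInterval × unitInterval → X)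
    (s1 s2 : TopologicalSpace X) : Prop :=
  SfinPH H (OpenCovers s1) (OpenCovers s2) ∧ SfinPH H (OpenCovers s2) (OpenCovers s1)

/-- `X` has the PH-almost Menger property. -/
def PHAlmostMenger {X : Type u} (H : unitInterval × unitInterval → X)
    (s1 s2 : TopologicalSpace X) : Prop :=
  SfinPH H (OpenCovers s1) (ClosureCovers s1 s2) ∧ SfinPH H (OpenCovers s2) (ClosureCovers s2 s1)

/-- `X` has the PH-weak Menger property. -/
def PHWeakMenger {X : Type u} (H : unitInterval × unitInterval → X)
    (s1 s2 : TopologicalSpace X) : Prop :=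
  SfinPH H (OpenCovers s1) (DenseFamilies s1 s2) ∧ SfinPH H (OpenCovers s2) (DenseFamilies s2 s1)

/-- `s1` is regular with respect to `s2`. -/
def RegularWRT {Y : Type v} (s1 s2 : TopologicalSpace Y) : Prop :=
  ∀ (x : Y) (P : Set Y), IsClosed[s1] P → x ∉ P →
    ∃ U V : Set Y, IsOpen[s1] U ∧ IsOpen[s2] V ∧ x ∈ U ∧ P ⊆ V ∧ U ∩ V = ∅

/-- `(Y, s1, s2)` is pairwise T1. -/
def PairwiseT1 {Y : Type v} (s1 s2 : TopologicalSpace Y) : Prop :=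
  ∀ x y : Y, x ≠ y →
    ∃ U V : Set Y, IsOpen[s1] U ∧ IsOpen[s2] V ∧ x ∈ U ∧ y ∉ U ∧ y ∈ V ∧ x ∉ V

/-- `(Y, s1, s2)` is pairwise regular. -/
def PairwiseRegular {Y : Type v} (s1 s2 : TopologicalSpace Y) : Prop :=
  RegularWRT s1 s2 ∧ RegularWRT s2 s1

/-- `(Y, s1, s2)` is pairwise T3. -/
def PairwiseT3 {Y : Type v} (s1 s2 : TopologicalSpace Y) : Prop :=
  PairwiseRegular s1 s2 ∧ PairwiseT1 s1 s2

/-- `s1` is locally compact with respect to `s2`. -/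
def LocallyCompactWRT {Y : Type v} (s1 s2 : TopologicalSpace Y) : Prop :=
  ∀ x : Y, ∃ N : Set Y, N ∈ @nhds Y s2 x ∧ @IsCompact Y s1 N

/-- `(Y, s1, s2)` is pairwise locally compact. -/
def PairwiseLocallyCompact {Y : Type v} (s1 s2 : TopologicalSpace Y) : Prop :=
  LocallyCompactWRT s1 s2 ∧ LocallyCompactWRT s2 s1

/-- A topological space is a P-space if the union of countably many closed sets is closed. -/
def IsPSpaceTop {Y : Type v} (s : TopologicalSpace Y) : Prop :=
  ∀ C : ℕ → Set Y, (∀ n, IsClosed[s] (C n)) → IsClosed[s] (⋃ n, C n)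

/-- `(Y, s1, s2)` is a pairwise P-space. -/
def PairwisePSpace {Y : Type v} (s1 s2 : TopologicalSpace Y) : Prop :=
  IsPSpaceTop s1 ∧ IsPSpaceTop s2

/-!
In a T1 P-space every countable set is closed, so every compact set is finite: an accumulation
point `x` of a countably infinite subset `D` would lie in the closure of the closed set `D \ {x}`.
Pairwise local compactness then gives every point a finite neighbourhood in each topology, so
both topologies are discrete. Closures are trivial in a discrete space, hence open covers, families
whose closures cover and families with dense union are the same collections, whatever `H` is.
-/

section PSpace

variable {Y : Type*} [t : TopologicalSpace Y] [T1Space Y]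

theorem IsPSpaceTop.isClosed_of_countable (hP : IsPSpaceTop t) {C : Set Y} (hC : C.Countable) :
    IsClosed C := by
  rcases C.eq_empty_or_nonempty with rfl | hne
  · exact isClosed_empty
  obtain ⟨e, rfl⟩ := hC.exists_eq_range hne
  rw [← iUnion_singleton_eq_range]
  exact hP _ fun _ => isClosed_singleton

theorem IsPSpaceTop.finite_of_isCompact (hP : IsPSpaceTop t) {K : Set Y} (hK : IsCompact K) :
    K.Finite := by
  by_contra hinf
  obtain ⟨D, hDK, hD, hDinf⟩ := Set.Infinite.exists_subset_countable_infinite hinf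
  obtain ⟨x, -, hx⟩ := hDinf.exists_accPt_of_subset_isCompact hK hDK
  have hclosed : IsClosed (D \ {x}) := hP.isClosed_of_countable (hD.mono sdiff_subset)
  have hmem : x ∈ closure (D \ {x}) :=
    mem_closure_iff_clusterPt.mpr (accPt_principal_iff_clusterPt.mp hx)
  exact (hclosed.closure_eq ▸ hmem).2 rfl

end PSpace

theorem PairwiseT1.symm {Y : Type*} {s1 s2 : TopologicalSpace Y} (h : PairwiseT1 s1 s2) :
    PairwiseT1 s2 s1 := by
  intro a b hab
  obtain ⟨U, V, hU, hV, hbU, haU, haV, hbV⟩ := h b a hab.symm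
  exact ⟨V, U, hV, hU, haV, hbV, hbU, haU⟩

theorem PairwiseT1.t1Space {Y : Type*} {s1 s2 : TopologicalSpace Y} (h : PairwiseT1 s1 s2) :
    @T1Space Y s1 :=
  @t1Space_iff_exists_open Y s1 |>.mpr fun a b hab =>
    let ⟨U, _, hU, _, haU, hbU, _⟩ := h a b hab
    ⟨U, hU, haU, hbU⟩

theorem discreteTopology_of_locallyCompactWRT {Y : Type*} {s1 s2 : TopologicalSpace Y}
    (h1 : @T1Space Y s1) (h2 : @T1Space Y s2) (hP : IsPSpaceTop s1)
    (hLC : LocallyCompactWRT s1 s2) : @DiscreteTopology Y s2 := by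
  refine (@discreteTopology_iff_isOpen_singleton Y s2).mpr fun x => ?_
  obtain ⟨N, hN, hNK⟩ := hLC x
  exact @isOpen_singleton_of_finite_mem_nhds Y s2 h2 x N hN
    (@IsPSpaceTop.finite_of_isCompact Y s1 h1 hP N hNK)

section DiscreteCovers

variable {Y : Type*}

theorem openCovers_eq_of_discreteTopology [t : TopologicalSpace Y] [DiscreteTopology Y] :
    OpenCovers t = {𝒰 : Set (Set Y) | ⋃₀ 𝒰 = univ} := by
  simp [OpenCovers]

theorem closureCovers_eq_openCovers (si : TopologicalSpace Y) [sj : TopologicalSpace Y]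
    [DiscreteTopology Y] : ClosureCovers si sj = OpenCovers si := by
  simp [ClosureCovers, OpenCovers, sUnion_eq_biUnion]

theorem denseFamilies_eq_openCovers (si : TopologicalSpace Y) [sj : TopologicalSpace Y]
    [DiscreteTopology Y] : DenseFamilies si sj = OpenCovers si := by
  simp [DenseFamilies, OpenCovers]

end DiscreteCovers

theorem phRothberger_tfae_general {X : Type u} (s1 s2 : TopologicalSpace X)
    (H : unitInterval × unitInterval → X)
    (hT3 : PairwiseT3 s1 s2) (hLC : PairwiseLocallyCompact s1 s2)
    (hP : PairwisePSpace s1 s2) :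
    (PHRothberger H s1 s2 ↔ PHAlmostRothberger H s1 s2) ∧
    (PHAlmostRothberger H s1 s2 ↔ PHWeakRothberger H s1 s2) := by
  have h1 : @T1Space X s1 := hT3.2.t1Space
  have h2 : @T1Space X s2 := hT3.2.symm.t1Space
  have : @DiscreteTopology X s1 := discreteTopology_of_locallyCompactWRT h2 h1 hP.2 hLC.2
  have : @DiscreteTopology X s2 := discreteTopology_of_locallyCompactWRT h1 h2 hP.1 hLC.1
  simp only [PHRothberger, PHAlmostRothberger, PHWeakRothberger, closureCovers_eq_openCovers,
    denseFamilies_eq_openCovers, openCovers_eq_of_discreteTopology, and_self]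

theorem phRothberger_tfae {X : Type u} (s1 s2 : TopologicalSpace X)
    (f : unitInterval → unitInterval) (g : X → X) (x y : X) (F : unitInterval → X)
    (hf : PairwiseContinuous inferInstance inferInstance inferInstance inferInstance f)
    (hg : PairwiseContinuous s1 s2 s1 s2 g)
    (hF : IsBitopPath s1 s2 F x y)
    (H : unitInterval × unitInterval → X) (hH : IsBTDSPathHomotopy s1 s2 f g F x y H)
    (hT3 : PairwiseT3 s1 s2) (hLC : PairwiseLocallyCompact s1 s2)
    (hP : PairwisePSpace s1 s2) :
    (PHRothberger H s1 s2 ↔ PHAlmostRothberger H s1 s2) ∧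
    (PHAlmostRothberger H s1 s2 ↔ PHWeakRothberger H s1 s2) :=
  phRothberger_tfae_general s1 s2 H hT3 hLC hP
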